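/- Under the Setup, assume additionally that every hyperedge of H has multiplicity at most m, and that d_1, d_2 ≥ 1 are integers with d_1 + d_2 ≤ m+1, d_1 + 1 ≤ t and t − d_2 ≥ 1, such that the hyperedges e_1,…,e_{d_1} all have the same underlying vertex set, which differs from the underlying vertex set of e_{d_1+1}, and the hyperedges e_t, e_{t−1},…,e_{t−d_2+1} all have the same underlying vertex set, which differs from the underlying vertex set of e_{t−d_2}. If e_1 ∩ U = {v_1,…,v_{d_1}} and e_t ∩ U = {v_{t−d_2},…,v_{t−1}}, then either |N_H((e_1 ∪ e_t) ∖ {v_{d_1}, v_{t−d_2}})| ≤ m+1, or there exists a set S of vertices of H with |S| ≥ 2r−1 and N_H(S) ⊆ F. -/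

import Mathlib

/-!
Call a vertex good (`IsPathStart`) if it is the first vertex of a Berge path of length `t` whose
edges are exactly `e 1, …, e t`. An edge outside this multiset through a good vertex would either
extend the path or, containing all of its `t + 1 ≤ r` vertices, close it into a Berge cycle of
length `t`; hence `N_H(S) ⊆ F` whenever all vertices of `S` are good.

Every vertex of `W = (e 1 ∪ e t) \ {v d1, v (t - d2)}` is good: a vertex of `e 1` outside the path
replaces the first end vertex, and `v j` with `j < d1` is reached by a Pósa rotation inside the
block `e 1 = ⋯ = e d1`; the vertices of `e t` are treated in the same way after reversing the path.
If `|N_H(W)| > m + 1 ≥ d1 + d2`, some middle edge `e i` with `d1 < i ≤ t - d2` meets `W`, and one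
more rotation at `e i` makes `v (i - 1)` or `v i` good, although it lies outside `W`. Finally
`e 1 ∩ e t` lies on the path (otherwise there is again a `t`-cycle), so `|W| ≥ 2r - 2`.
-/

namespace BergeM

def MIsBergePath {n : ℕ} (E : Multiset (Finset (Fin n))) (k : ℕ)
    (v : Fin (k + 1) → Fin n) (f : Fin k → Finset (Fin n)) : Prop :=
  Function.Injective v ∧ (↑(List.ofFn f) : Multiset (Finset (Fin n))) ≤ E ∧
    ∀ i : Fin k, v i.castSucc ∈ f i ∧ v i.succ ∈ f i

def MHasBergePath {n : ℕ} (E : Multiset (Finset (Fin n))) (k : ℕ) : Prop :=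
  ∃ v f, MIsBergePath E k v f

def MBPFree {n : ℕ} (E : Multiset (Finset (Fin n))) (k : ℕ) : Prop :=
  ¬ MHasBergePath E k

def MConnected {n : ℕ} (E : Multiset (Finset (Fin n))) : Prop :=
  ∀ x y : Fin n, ∃ (k : ℕ) (v : Fin (k + 1) → Fin n) (f : Fin k → Finset (Fin n)),
    MIsBergePath E k v f ∧ (∃ i, v i = x) ∧ (∃ i, v i = y)

def MUniform {n : ℕ} (E : Multiset (Finset (Fin n))) (r : ℕ) : Prop :=
  ∀ e ∈ E, e.card = r

def MIsBergeCycle {n : ℕ} (E : Multiset (Finset (Fin n))) (k : ℕ)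
    (v : Fin k → Fin n) (f : Fin k → Finset (Fin n)) : Prop :=
  Function.Injective v ∧ (↑(List.ofFn f) : Multiset (Finset (Fin n))) ≤ E ∧
    ∀ i : Fin k, v i ∈ f i ∧ v ⟨(i.val + 1) % k, Nat.mod_lt _ i.pos⟩ ∈ f i

def MHasBergeCycle {n : ℕ} (E : Multiset (Finset (Fin n))) (k : ℕ) : Prop :=
  ∃ v f, MIsBergeCycle E k v f

def edgeNbhd {n : ℕ} (E : Multiset (Finset (Fin n))) (S : Finset (Fin n)) :
    Multiset (Finset (Fin n)) :=
  E.filter fun e => (e ∩ S).Nonempty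

theorem map_range_eq_of_involution {α : Type*} {s : ℕ} {g g' : ℕ → α} (σ : ℕ → ℕ)
    (hσ : ∀ i < s, σ i < s ∧ σ (σ i) = i) (hg : ∀ i < s, g' i = g (σ i)) :
    (Multiset.range s).map g' = (Multiset.range s).map g := by
  have hinj : Set.InjOn σ (Finset.range s) := fun i hi j hj hij => by
    rw [← (hσ i (Finset.mem_range.1 hi)).2, hij, (hσ j (Finset.mem_range.1 hj)).2]
  have himage : (Finset.range s).image σ = Finset.range s := by
    ext i
    simp only [Finset.mem_image, Finset.mem_range]
    exact ⟨by rintro ⟨j, hj, rfl⟩; exact (hσ j hj).1, fun hi => ⟨σ i, (hσ i hi).1, (hσ i hi).2⟩⟩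
  rw [Multiset.map_congr rfl fun i hi => hg i (Multiset.mem_range.1 hi),
    show (fun i => g (σ i)) = g ∘ σ from rfl, ← Multiset.map_map, ← Finset.range_val,
    ← Finset.image_val_of_injOn hinj, himage]

theorem coe_ofFn_eq_map_range {α : Type*} (s : ℕ) (g : ℕ → α) :
    (↑(List.ofFn fun i : Fin s => g i) : Multiset α) = (Multiset.range s).map g := by
  show _ = ((List.range s).map g : Multiset α)
  rw [List.ofFn_eq_map, ← List.map_coe_finRange_eq_range, List.map_map]
  rfl

theorem map_range_succ {α : Type*} (s : ℕ) (g : ℕ → α) :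
    (Multiset.range (s + 1)).map g = g 0 ::ₘ (Multiset.range s).map fun i => g (i + 1) := by
  simp only [Multiset.range, List.range_succ_eq_map, Multiset.map_coe, List.map_cons,
    List.map_map, Multiset.cons_coe]
  rfl

theorem map_range_cons {α : Type*} {s : ℕ} (g : ℕ → α) (f : α) :
    (Multiset.range (s + 1)).map (fun i => if i = 0 then f else g (i - 1)) =
      f ::ₘ (Multiset.range s).map g := by
  rw [map_range_succ]
  simp

theorem map_range_rotate {α : Type*} {s : ℕ} (g : ℕ → α) {k : ℕ} (hk : k ≤ s) :
    (Multiset.range s).map (fun j => g (if j < k then k - 1 - j else j)) =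
      (Multiset.range s).map g :=
  map_range_eq_of_involution (fun j => if j < k then k - 1 - j else j)
    (fun i hi => by constructor <;> split_ifs <;> omega) fun _ _ => rfl

theorem cons_le_of_count_lt {α : Type*} [DecidableEq α] {F E : Multiset α} {f : α} (hF : F ≤ E)
    (hf : F.count f < E.count f) : f ::ₘ F ≤ E := by
  rw [Multiset.le_iff_count]
  intro a
  rw [Multiset.count_cons]
  split_ifs with ha
  · subst ha
    omega
  · exact Multiset.le_iff_count.1 hF a

theorem mem_of_inter_image_eq {α : Type*} [DecidableEq α] {c : Finset α} {v : ℕ → α}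
    {s T : Finset ℕ} (hv : Set.InjOn v s) (hT : T ⊆ s) (h : c ∩ s.image v = T.image v) {j : ℕ}
    (hj : j ∈ s) (hc : v j ∈ c) : j ∈ T := by
  obtain ⟨j', hj', hjj'⟩ :=
    Finset.mem_image.1 (h ▸ Finset.mem_inter.2 ⟨hc, Finset.mem_image_of_mem v hj⟩)
  exact hv (hT hj') hj hjj' ▸ hj'

theorem two_mul_sub_two_le_card_union_sdiff {α : Type*} [DecidableEq α] {c c' : Finset α}
    {r : ℕ} {a b : α} (hc : c.card = r) (hc' : c'.card = r) (h : c ∩ c' ⊆ {a} ∩ {b}) :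
    2 * r - 2 ≤ ((c ∪ c') \ {a, b}).card := by
  have hsdiff := Finset.le_card_sdiff {a, b} (c ∪ c')
  have hunion := Finset.card_union_add_card_inter c c'
  by_cases hab : a = b
  · subst hab
    have := Finset.card_le_card h
    simp only [Finset.inter_self, Finset.card_singleton, Finset.mem_singleton,
      Finset.insert_eq_of_mem] at this hsdiff ⊢
    omega
  · rw [Finset.subset_empty.1 (h.trans (by simp [hab]))] at hunion
    have := Finset.card_le_two (a := a) (b := b)
    simp only [Finset.card_empty] at hunion
    omega

section

variable {n : ℕ}

theorem MHasBergePath.mono {E : Multiset (Finset (Fin n))} {s s' : ℕ} (h : MHasBergePath E s)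
    (hs : s' ≤ s) : MHasBergePath E s' := by
  obtain ⟨v, f, hinj, hf, hmem⟩ := h
  refine ⟨Fin.take (s' + 1) (by omega) v, Fin.take s' hs f,
    hinj.comp (Fin.castLE_injective _), ?_, fun i => hmem (Fin.castLE hs i)⟩
  rw [Fin.ofFn_take_eq_take_ofFn]
  exact (Multiset.coe_le.2 (List.take_sublist _ _).subperm).trans hf

structure IsBergePath (s : ℕ) (p : ℕ → Fin n) (g : ℕ → Finset (Fin n)) : Prop where
  injOn : Set.InjOn p (Set.Iic s)
  mem : ∀ i < s, p i ∈ g i ∧ p (i + 1) ∈ g i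

namespace IsBergePath

variable {E : Multiset (Finset (Fin n))} {s : ℕ} {p : ℕ → Fin n} {g : ℕ → Finset (Fin n)}

theorem mono (h : IsBergePath s p g) {s' : ℕ} (hs : s' ≤ s) : IsBergePath s' p g :=
  ⟨h.injOn.mono (Set.Iic_subset_Iic.2 hs), fun i hi => h.mem i (by omega)⟩

theorem tail (h : IsBergePath (s + 1) p g) :
    IsBergePath s (fun i => p (i + 1)) (fun i => g (i + 1)) :=
  ⟨fun a ha b hb hab => by
    simpa using h.injOn (by simpa using ha) (by simpa using hb) hab,
   fun i hi => h.mem (i + 1) (by omega)⟩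

theorem cons (h : IsBergePath s p g) {y : Fin n} {f : Finset (Fin n)} (hy : ∀ i ≤ s, p i ≠ y)
    (hyf : y ∈ f) (hf : p 0 ∈ f) :
    IsBergePath (s + 1) (fun i => if i = 0 then y else p (i - 1))
      (fun i => if i = 0 then f else g (i - 1)) := by
  refine ⟨fun a ha b hb hab => ?_, fun i hi => ?_⟩
  · simp only [Set.mem_Iic] at ha hb
    split_ifs at hab with h0a h0b h0b
    · omega
    · exact absurd hab.symm (hy _ (by omega))
    · exact absurd hab (hy _ (by omega))
    · have := h.injOn (Set.mem_Iic.2 (by omega)) (Set.mem_Iic.2 (by omega)) hab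
      omega
  · rcases Nat.eq_zero_or_pos i with rfl | hi0
    · simpa using ⟨hyf, hf⟩
    · have := h.mem (i - 1) (by omega)
      simp only [Nat.ne_of_gt hi0, if_false, Nat.add_one_ne_zero, Nat.add_sub_cancel]
      rwa [Nat.sub_add_cancel hi0] at this

/-- Pósa rotation. -/
theorem rotate (h : IsBergePath s p g) {k : ℕ} (hk : k < s) (h0 : p 0 ∈ g k) :
    IsBergePath s (fun j => p (if j ≤ k then k - j else j))
      (fun j => g (if j < k then k - 1 - j else j)) := by
  refine ⟨h.injOn.comp (fun a _ b _ hab => by split_ifs at hab <;> omega)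
    (fun a ha => by simp only [Set.mem_Iic] at ha ⊢; split_ifs <;> omega), fun i hi => ?_⟩
  rcases lt_trichotomy i k with hik | rfl | hik
  · have := h.mem (k - 1 - i) (by omega)
    rw [if_pos hik.le, if_pos (by omega : i + 1 ≤ k), if_pos hik,
      show k - (i + 1) = k - 1 - i by omega, show k - i = k - 1 - i + 1 by omega]
    exact this.symm
  · simpa using ⟨h0, (h.mem i hk).2⟩
  · rw [if_neg (by omega), if_neg (by omega), if_neg (by omega)]
    exact h.mem i hi

theorem mHasBergePath (h : IsBergePath s p g) (hE : (Multiset.range s).map g ≤ E) :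
    MHasBergePath E s := by
  refine ⟨fun i => p i, fun i => g i, fun i j hij => Fin.ext (h.injOn
    (Set.mem_Iic.2 (Nat.lt_succ_iff.1 i.2)) (Set.mem_Iic.2 (Nat.lt_succ_iff.1 j.2)) hij), ?_,
    fun i => h.mem i i.2⟩
  rwa [coe_ofFn_eq_map_range]

theorem mHasBergeCycle (h : IsBergePath s p g) {f : Finset (Fin n)} (hs : p s ∈ f) (h0 : p 0 ∈ f)
    (hE : f ::ₘ (Multiset.range s).map g ≤ E) : MHasBergeCycle E (s + 1) := by
  refine ⟨fun i => p i, fun i => if (i : ℕ) < s then g i else f, fun i j hij => Fin.ext (h.injOn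
    (Set.mem_Iic.2 (Nat.lt_succ_iff.1 i.2)) (Set.mem_Iic.2 (Nat.lt_succ_iff.1 j.2)) hij), ?_,
    fun i => ?_⟩
  · have hlist : (List.ofFn fun i : Fin (s + 1) => if (i : ℕ) < s then g i else f) =
        (List.ofFn fun i : Fin s => g i) ++ [f] := by
      rw [List.ofFn_succ']
      simp
    rw [hlist, ← Multiset.coe_add, coe_ofFn_eq_map_range, add_comm]
    simpa using hE
  · by_cases hi : (i : ℕ) < s
    · simpa [hi, Nat.mod_eq_of_lt (Nat.succ_lt_succ hi)] using h.mem i hi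
    · have his : (i : ℕ) = s := by omega
      simpa [hi, his] using ⟨hs, h0⟩

end IsBergePath

theorem edgeNbhd_le_edgeNbhd_of_le {E F : Multiset (Finset (Fin n))} {S : Finset (Fin n)}
    (h : edgeNbhd E S ≤ F) : edgeNbhd E S ≤ edgeNbhd F S :=
  calc edgeNbhd E S = (edgeNbhd E S).filter fun e => (e ∩ S).Nonempty :=
        (Multiset.filter_eq_self.2 fun _ ha => (Multiset.mem_filter.1 ha).2).symm
    _ ≤ edgeNbhd F S := Multiset.filter_le_filter _ h

def IsPathStart (F : Multiset (Finset (Fin n))) (t : ℕ) (w : Fin n) : Prop :=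
  ∃ p g, IsBergePath t p g ∧ (Multiset.range t).map g = F ∧ p 0 = w

section LongestPath

variable {E F : Multiset (Finset (Fin n))} {r t : ℕ}

/-- If `f` contained the start of the path, it would either extend the path or, containing all of
its `t + 1 ≤ r` vertices, close the path without its first edge into a Berge cycle of length `t`. -/
theorem notMem_of_isPathStart (hu : MUniform E r) (htr : t < r) (ht : 0 < t)
    (hmax : ∀ s, MHasBergePath E s → s ≤ t) (hcyc : ¬ MHasBergeCycle E t) {w : Fin n}
    (hw : IsPathStart F t w) {f : Finset (Fin n)} (hf : f ::ₘ F ≤ E) : w ∉ f := by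
  obtain ⟨p, g, hp, rfl, rfl⟩ := hw
  intro hwf
  by_cases hsub : f ⊆ (Finset.Iic t).image p
  · have hfeq : f = (Finset.Iic t).image p := by
      refine Finset.eq_of_subset_of_card_le hsub ?_
      rw [Finset.card_image_of_injOn (by simpa using hp.injOn), Nat.card_Iic,
        hu f (Multiset.mem_of_le hf (Multiset.mem_cons_self _ _))]
      omega
    have hmem : ∀ i ≤ t, p i ∈ f := fun i hi =>
      hfeq ▸ Finset.mem_image_of_mem p (Finset.mem_Iic.2 hi)
    obtain ⟨s, rfl⟩ : ∃ s, t = s + 1 := ⟨t - 1, by omega⟩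
    refine hcyc (hp.tail.mHasBergeCycle (hmem _ le_rfl) (hmem 1 (by omega)) (le_trans ?_ hf))
    rw [map_range_succ]
    exact Multiset.cons_le_cons f (Multiset.le_cons_self _ _)
  · obtain ⟨y, hyf, hyp⟩ := Finset.not_subset.1 hsub
    have hy : ∀ i ≤ t, p i ≠ y := fun i hi h =>
      hyp (h ▸ Finset.mem_image_of_mem p (Finset.mem_Iic.2 hi))
    have := hmax (t + 1) ((hp.cons hy hyf hwf).mHasBergePath (by rwa [map_range_cons]))
    omega

theorem edgeNbhd_le_of_isPathStart (hu : MUniform E r) (htr : t < r) (ht : 0 < t)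
    (hmax : ∀ s, MHasBergePath E s → s ≤ t) (hcyc : ¬ MHasBergeCycle E t) (hF : F ≤ E)
    {S : Finset (Fin n)} (hS : ∀ w ∈ S, IsPathStart F t w) : edgeNbhd E S ≤ F := by
  rw [Multiset.le_iff_count]
  intro f
  by_contra! hlt
  obtain ⟨w, hw⟩ := (Multiset.mem_filter.1 (Multiset.count_pos.1 (by omega :
    0 < (edgeNbhd E S).count f))).2
  rw [Finset.mem_inter] at hw
  refine notMem_of_isPathStart hu htr ht hmax hcyc (hS w hw.2) (cons_le_of_count_lt hF ?_) hw.1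
  exact hlt.trans_le (Multiset.count_le_of_le f (Multiset.filter_le _ _))

end LongestPath

def pathEdges (t : ℕ) (e : ℕ → Finset (Fin n)) : Multiset (Finset (Fin n)) :=
  (Multiset.range t).map fun i => e (i + 1)

theorem card_edgeNbhd_pathEdges_le {t d1 d2 : ℕ} {e : ℕ → Finset (Fin n)} {S : Finset (Fin n)}
    (hmid : ∀ i, d1 + 1 ≤ i → i ≤ t - d2 → e i ∩ S = ∅) :
    Multiset.card (edgeNbhd (pathEdges t e) S) ≤ d1 + d2 := by
  rw [edgeNbhd, pathEdges, Multiset.filter_map, Multiset.card_map, ← Finset.range_val,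
    ← Finset.filter_val, Finset.card_val]
  calc _ ≤ (Finset.range d1 ∪ Finset.Ico (t - d2) t).card := Finset.card_le_card fun i hi => ?_
    _ ≤ d1 + d2 := (Finset.card_union_le _ _).trans
      (by simp only [Finset.card_range, Nat.card_Ico]; omega)
  simp only [Finset.mem_filter, Finset.mem_range, Function.comp, Finset.mem_union,
    Finset.mem_Ico] at hi ⊢
  by_contra! h
  exact Finset.nonempty_iff_ne_empty.1 hi.2 (hmid (i + 1) (by omega) (by omega))

theorem pathEdges_reverse (t : ℕ) (e : ℕ → Finset (Fin n)) :
    pathEdges t (fun i => e (t + 1 - i)) = pathEdges t e :=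
  map_range_eq_of_involution (fun i => t - 1 - i) (fun i hi => ⟨by omega, by omega⟩)
    fun i hi => congrArg e (by omega)

/-- `e 1, …, e t` and `v 1, …, v (t - 1)` are the defining edges and internal vertices of a
Berge path of length `t` in `E`. -/
structure IsPathSkeleton (E : Multiset (Finset (Fin n))) (t : ℕ) (e : ℕ → Finset (Fin n))
    (v : ℕ → Fin n) : Prop where
  edges_le : pathEdges t e ≤ E
  injOn : Set.InjOn v (Set.Icc 1 (t - 1))
  mem_first : v 1 ∈ e 1
  mem_last : v (t - 1) ∈ e t
  mem : ∀ i, 2 ≤ i → i ≤ t - 1 → v (i - 1) ∈ e i ∧ v i ∈ e i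

theorem exists_mem_notMem_image {E : Multiset (Finset (Fin n))} {r t : ℕ} (hu : MUniform E r)
    (htr : t < r) (ht : 0 < t) {c : Finset (Fin n)} (hc : c ∈ E) (v : ℕ → Fin n) (x : Fin n) :
    ∃ u ∈ c, u ∉ (Finset.Icc 1 (t - 1)).image v ∧ u ≠ x := by
  have hcard : (insert x ((Finset.Icc 1 (t - 1)).image v)).card < c.card := by
    have himage := Finset.card_image_le (s := Finset.Icc 1 (t - 1)) (f := v)
    have hinsert := Finset.card_insert_le x ((Finset.Icc 1 (t - 1)).image v)
    rw [Nat.card_Icc] at himage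
    rw [hu c hc]
    omega
  obtain ⟨u, huc, hu⟩ := Finset.exists_mem_notMem_of_card_lt_card hcard
  rw [Finset.mem_insert, not_or] at hu
  exact ⟨u, huc, hu.2, hu.1⟩

namespace IsPathSkeleton

variable {E : Multiset (Finset (Fin n))} {t : ℕ} {e : ℕ → Finset (Fin n)} {v : ℕ → Fin n}

theorem mem_edges (hP : IsPathSkeleton E t e v) {i : ℕ} (h1 : 1 ≤ i) (hi : i ≤ t) : e i ∈ E :=
  Multiset.mem_of_le hP.edges_le
    (Multiset.mem_map.2 ⟨i - 1, Multiset.mem_range.2 (by omega), by rw [Nat.sub_add_cancel h1]⟩)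

theorem reverse (hP : IsPathSkeleton E t e v) (ht : 0 < t) :
    IsPathSkeleton E t (fun i => e (t + 1 - i)) (fun i => v (t - i)) where
  edges_le := (pathEdges_reverse t e).symm ▸ hP.edges_le
  injOn a ha b hb hab := by
    simp only [Set.mem_Icc] at ha hb
    have := hP.injOn (Set.mem_Icc.2 ⟨by omega, by omega⟩) (Set.mem_Icc.2 ⟨by omega, by omega⟩) hab
    omega
  mem_first := by simpa using hP.mem_last
  mem_last := by
    simpa [show t - (t - 1) = 1 by omega, show t + 1 - t = 1 by omega] using hP.mem_first
  mem i hi1 hi2 := by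
    obtain ⟨h1, h2⟩ := hP.mem (t + 1 - i) (by omega) (by omega)
    constructor
    · convert h2 using 2
      omega
    · convert h1 using 2
      omega

theorem isBergePath (hP : IsPathSkeleton E t e v) {w z : Fin n} (hw : w ∈ e 1) (hz : z ∈ e t)
    (hwU : w ∉ (Finset.Icc 1 (t - 1)).image v) (hzU : z ∉ (Finset.Icc 1 (t - 1)).image v)
    (hwz : w ≠ z) :
    IsBergePath t (fun j => if j = 0 then w else if j = t then z else v j)
      (fun i => e (i + 1)) := by
  refine ⟨fun a ha b hb hab => ?_, fun i hi => ⟨?_, ?_⟩⟩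
  · simp only [Set.mem_Iic] at ha hb
    split_ifs at hab <;> grind [Set.InjOn, hP.injOn]
  · rcases Nat.eq_zero_or_pos i with rfl | hi0
    · simpa using hw
    · rw [if_neg hi0.ne', if_neg hi.ne]
      rcases Nat.lt_or_ge (i + 1) t with hit | hit
      · simpa using (hP.mem (i + 1) (by omega) (by omega)).1
      · convert hP.mem_last using 2 <;> omega
  · rw [if_neg (Nat.succ_ne_zero i)]
    split_ifs with hit
    · exact hit ▸ hz
    · rcases Nat.eq_zero_or_pos i with rfl | hi0
      · exact hP.mem_first
      · exact (hP.mem (i + 1) (by omega) (by omega)).2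

/-- A vertex of `e 1 ∩ e t` outside the skeleton would close it into a Berge cycle of length `t`. -/
theorem inter_subset_image (hP : IsPathSkeleton E t e v) {r : ℕ} (hu : MUniform E r)
    (htr : t < r) (ht : 0 < t) (hcyc : ¬ MHasBergeCycle E t) :
    e 1 ∩ e t ⊆ (Finset.Icc 1 (t - 1)).image v := by
  intro y hy
  obtain ⟨hy1, hyt⟩ := Finset.mem_inter.1 hy
  by_contra hyU
  obtain ⟨z, hz, hzU, hzy⟩ := exists_mem_notMem_image hu htr ht (hP.mem_edges ht le_rfl) v y
  have hp := hP.isBergePath hy1 hz hyU hzU hzy.symm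
  obtain ⟨s, rfl⟩ : ∃ s, t = s + 1 := ⟨t - 1, by omega⟩
  refine hcyc ((hp.mono s.le_succ).mHasBergeCycle (f := e (s + 1)) ?_ (by simpa using hyt) ?_)
  · rcases Nat.eq_zero_or_pos s with rfl | hs
    · simpa using hyt
    · simpa [hs.ne'] using hP.mem_last
  · have := hP.edges_le
    rwa [pathEdges, Multiset.range_succ, Multiset.map_cons] at this

end IsPathSkeleton

structure IsInitialBlock (t : ℕ) (e : ℕ → Finset (Fin n)) (v : ℕ → Fin n) (d : ℕ) : Prop where
  one_le : 1 ≤ d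
  add_one_le : d + 1 ≤ t
  eq_first : ∀ i, 1 ≤ i → i ≤ d → e i = e 1
  le_of_mem_first : ∀ j, 1 ≤ j → j ≤ t - 1 → v j ∈ e 1 → j ≤ d

section InitialBlock

variable {E : Multiset (Finset (Fin n))} {r t d : ℕ} {e : ℕ → Finset (Fin n)} {v : ℕ → Fin n}

theorem isInitialBlock_of_inter_image_eq (hv : Set.InjOn v (Set.Icc 1 (t - 1))) (hd : 1 ≤ d)
    (hdt : d + 1 ≤ t) (heq : ∀ i, 1 ≤ i → i ≤ d → e i = e 1)
    (hU : e 1 ∩ (Finset.Icc 1 (t - 1)).image v = (Finset.Icc 1 d).image v) :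
    IsInitialBlock t e v d where
  one_le := hd
  add_one_le := hdt
  eq_first := heq
  le_of_mem_first j h1 h2 hj := (Finset.mem_Icc.1 (mem_of_inter_image_eq (by rwa [Finset.coe_Icc])
    (Finset.Icc_subset_Icc le_rfl (by omega)) hU (Finset.mem_Icc.2 ⟨h1, h2⟩) hj)).2

theorem isInitialBlock_reverse_of_inter_image_eq (hv : Set.InjOn v (Set.Icc 1 (t - 1)))
    (hd : 1 ≤ d) (hdt : d + 1 ≤ t) (heq : ∀ i, t - d + 1 ≤ i → i ≤ t → e i = e t)
    (hU : e t ∩ (Finset.Icc 1 (t - 1)).image v = (Finset.Icc (t - d) (t - 1)).image v) :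
    IsInitialBlock t (fun i => e (t + 1 - i)) (fun i => v (t - i)) d where
  one_le := hd
  add_one_le := hdt
  eq_first i h1 h2 := by simpa using heq (t + 1 - i) (by omega) (by omega)
  le_of_mem_first j h1 h2 hj := by
    have := (Finset.mem_Icc.1 (mem_of_inter_image_eq (by rwa [Finset.coe_Icc])
      (Finset.Icc_subset_Icc (by omega) le_rfl) hU (Finset.mem_Icc.2 ⟨(by omega : 1 ≤ t - j),
        (by omega : t - j ≤ t - 1)⟩) (by simpa using hj))).1
    omega

theorem IsInitialBlock.sub_le_of_mem_last
    (hB : IsInitialBlock t (fun i => e (t + 1 - i)) (fun i => v (t - i)) d) {j : ℕ} (h1 : 1 ≤ j)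
    (h2 : j ≤ t - 1) (hj : v j ∈ e t) : t - d ≤ j := by
  have := hB.le_of_mem_first (t - j) (by omega) (by omega)
    (by simpa [show t - (t - j) = j by omega] using hj)
  omega

theorem exists_isBergePath_of_mem_first (hu : MUniform E r) (htr : t < r)
    (hP : IsPathSkeleton E t e v) (hB : IsInitialBlock t e v d) {w : Fin n} (hw : w ∈ e 1)
    (hwd : w ≠ v d) :
    ∃ p g, IsBergePath t p g ∧ (Multiset.range t).map g = pathEdges t e ∧ p 0 = w ∧
      ∀ i, d ≤ i → i < t → p i = v i ∧ g i = e (i + 1) := by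
  have ht : 0 < t := by have := hB.add_one_le; omega
  have hd := hB.one_le
  have het := hP.mem_edges ht le_rfl
  by_cases hwU : w ∈ (Finset.Icc 1 (t - 1)).image v
  · -- `w = v j` with `j < d`: start at a fresh `u ∈ e 1 = e (j + 1)` and rotate at `j`
    obtain ⟨j, hj, rfl⟩ := Finset.mem_image.1 hwU
    rw [Finset.mem_Icc] at hj
    have hjd : j < d :=
      lt_of_le_of_ne (hB.le_of_mem_first j hj.1 hj.2 hw) (by rintro rfl; exact hwd rfl)
    obtain ⟨z, hz, hzU, -⟩ := exists_mem_notMem_image hu htr ht het v (v j)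
    obtain ⟨u, hu1, huU, huz⟩ :=
      exists_mem_notMem_image hu htr ht (hP.mem_edges le_rfl ht) v z
    refine ⟨_, _, (hP.isBergePath hu1 hz huU hzU huz).rotate (k := j) (by omega) ?_,
      map_range_rotate (fun i => e (i + 1)) (by omega : j ≤ t), ?_,
      fun i hi hit => ?_⟩
    · simpa [hB.eq_first (j + 1) (by omega) (by omega)] using hu1
    · simp [show j ≠ 0 by omega, show j ≠ t by omega]
    · simp [show ¬ i ≤ j by omega, show ¬ i < j by omega, show i ≠ 0 by omega, hit.ne]
  · obtain ⟨z, hz, hzU, hzw⟩ := exists_mem_notMem_image hu htr ht het v w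
    refine ⟨_, _, hP.isBergePath hw hz hwU hzU hzw.symm, rfl, by simp, fun i hi hit => ?_⟩
    simp [show i ≠ 0 by omega, hit.ne]

theorem isPathStart_of_mem_first (hu : MUniform E r) (htr : t < r)
    (hP : IsPathSkeleton E t e v) (hB : IsInitialBlock t e v d) {w : Fin n} (hw : w ∈ e 1)
    (hwd : w ≠ v d) : IsPathStart (pathEdges t e) t w :=
  let ⟨p, g, hp, hg, h0, _⟩ := exists_isBergePath_of_mem_first hu htr hP hB hw hwd
  ⟨p, g, hp, hg, h0⟩

theorem isPathStart_of_mem_first_of_mem (hu : MUniform E r) (htr : t < r)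
    (hP : IsPathSkeleton E t e v) (hB : IsInitialBlock t e v d) {i : ℕ} (hi : d + 1 ≤ i)
    (hit : i ≤ t) {x : Fin n} (hx1 : x ∈ e 1) (hxi : x ∈ e i) (hxd : x ≠ v d) :
    IsPathStart (pathEdges t e) t (v (i - 1)) := by
  obtain ⟨p, g, hp, hg, rfl, hpv⟩ := exists_isBergePath_of_mem_first hu htr hP hB hx1 hxd
  obtain ⟨hpi, hgi⟩ := hpv (i - 1) (by omega) (by omega)
  refine ⟨_, _, hp.rotate (k := i - 1) (by omega) ?_,
    (map_range_rotate g (by omega : i - 1 ≤ t)).trans hg, ?_⟩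
  · rwa [hgi, Nat.sub_add_cancel (by omega)]
  · simpa using hpi

end InitialBlock

section TwoBlocks

variable {E : Multiset (Finset (Fin n))} {r t d1 d2 : ℕ} {e : ℕ → Finset (Fin n)}
  {v : ℕ → Fin n}

theorem isPathStart_of_mem_sdiff (hu : MUniform E r) (htr : t < r)
    (hP : IsPathSkeleton E t e v) (hB1 : IsInitialBlock t e v d1)
    (hBt : IsInitialBlock t (fun i => e (t + 1 - i)) (fun i => v (t - i)) d2) {w : Fin n}
    (hw : w ∈ (e 1 ∪ e t) \ {v d1, v (t - d2)}) : IsPathStart (pathEdges t e) t w := by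
  simp only [Finset.mem_sdiff, Finset.mem_union, Finset.mem_insert, Finset.mem_singleton,
    not_or] at hw
  obtain ⟨hw1 | hwt, hwd1, hwd2⟩ := hw
  · exact isPathStart_of_mem_first hu htr hP hB1 hw1 hwd1
  · rw [← pathEdges_reverse]
    exact isPathStart_of_mem_first hu htr (hP.reverse (by have := hB1.add_one_le; omega)) hBt
      (by simpa using hwt) hwd2

theorem exists_isPathStart_notMem_sdiff (hu : MUniform E r) (htr : t < r)
    (hP : IsPathSkeleton E t e v) (hB1 : IsInitialBlock t e v d1)
    (hBt : IsInitialBlock t (fun i => e (t + 1 - i)) (fun i => v (t - i)) d2) {i : ℕ}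
    (hi1 : d1 + 1 ≤ i) (hi2 : i ≤ t - d2)
    (hW : (e i ∩ ((e 1 ∪ e t) \ {v d1, v (t - d2)})).Nonempty) :
    ∃ y ∉ (e 1 ∪ e t) \ {v d1, v (t - d2)}, IsPathStart (pathEdges t e) t y := by
  have := hB1.one_le
  have := hB1.add_one_le
  have := hBt.one_le
  obtain ⟨x, hx⟩ := hW
  simp only [Finset.mem_inter, Finset.mem_sdiff, Finset.mem_union, Finset.mem_insert,
    Finset.mem_singleton, not_or] at hx ⊢
  obtain ⟨hxi, hx1 | hxt, hxd1, hxd2⟩ := hx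
  · refine ⟨v (i - 1), ?_,
      isPathStart_of_mem_first_of_mem hu htr hP hB1 hi1 (by omega) hx1 hxi hxd1⟩
    rintro ⟨h1 | h2, hne, -⟩
    · have := hB1.le_of_mem_first (i - 1) (by omega) (by omega) h1
      exact hne (by rw [show i - 1 = d1 by omega])
    · have := hBt.sub_le_of_mem_last (by omega) (by omega) h2
      omega
  · refine ⟨v i, ?_, ?_⟩
    · rintro ⟨h1 | h2, -, hne⟩
      · have := hB1.le_of_mem_first i (by omega) (by omega) h1
        omega
      · have := hBt.sub_le_of_mem_last (by omega) (by omega) h2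
        exact hne (by rw [show i = t - d2 by omega])
    · have := isPathStart_of_mem_first_of_mem hu htr (hP.reverse (by omega)) hBt
        (i := t + 1 - i) (by omega) (by omega) (by simpa using hxt)
        (by simpa [show t + 1 - (t + 1 - i) = i by omega] using hxi) hxd2
      rwa [pathEdges_reverse, show t - (t + 1 - i - 1) = i by omega] at this

theorem two_mul_sub_two_le_card_sdiff (hu : MUniform E r) (htr : t < r)
    (hcyc : ¬ MHasBergeCycle E t) (hP : IsPathSkeleton E t e v) (hB1 : IsInitialBlock t e v d1)
    (hBt : IsInitialBlock t (fun i => e (t + 1 - i)) (fun i => v (t - i)) d2)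
    (hdd : d1 ≤ t - d2) : 2 * r - 2 ≤ ((e 1 ∪ e t) \ {v d1, v (t - d2)}).card := by
  have := hB1.add_one_le
  refine two_mul_sub_two_le_card_union_sdiff (hu _ (hP.mem_edges le_rfl (by omega)))
    (hu _ (hP.mem_edges (by omega) le_rfl)) fun y hy => ?_
  obtain ⟨j, hj, rfl⟩ := Finset.mem_image.1 (hP.inter_subset_image hu htr (by omega) hcyc hy)
  rw [Finset.mem_Icc] at hj
  rw [Finset.mem_inter] at hy
  have := hB1.le_of_mem_first j hj.1 hj.2 hy.1
  have := hBt.sub_le_of_mem_last hj.1 hj.2 hy.2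
  exact Finset.mem_inter.2 ⟨by simp [show j = d1 by omega], by simp [show j = t - d2 by omega]⟩

end TwoBlocks

end

theorem stmt16    (n r k t : ℕ) (hrk : k ≤ r)
    (E : Multiset (Finset (Fin n))) (hu : MUniform E r)
    (hf : MBPFree E k)
    (ht : MHasBergePath E t) (hmax : ∀ s : ℕ, MHasBergePath E s → s ≤ t)
    (hcyc : ¬ MHasBergeCycle E t)
    (e : ℕ → Finset (Fin n)) (v : ℕ → Fin n)
    (he : (↑((List.range t).map fun i => e (i + 1)) : Multiset (Finset (Fin n))) ≤ E)
    (hvinj : Set.InjOn v (Set.Icc 1 (t - 1)))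
    (hv1 : v 1 ∈ e 1) (hvt : v (t - 1) ∈ e t)
    (hvmid : ∀ i : ℕ, 2 ≤ i → i ≤ t - 1 → v (i - 1) ∈ e i ∧ v i ∈ e i)
    (m d1 d2 : ℕ)
    (hd1 : 1 ≤ d1) (hd2 : 1 ≤ d2) (hd12 : d1 + d2 ≤ m + 1)
    (hd1t : d1 + 1 ≤ t) (hd2t : 1 ≤ t - d2)
    (he1 : ∀ i : ℕ, 1 ≤ i → i ≤ d1 → e i = e 1) (hne1 : e (d1 + 1) ≠ e 1)
    (het : ∀ i : ℕ, t - d2 + 1 ≤ i → i ≤ t → e i = e t)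
    (hU1 : e 1 ∩ (Finset.Icc 1 (t - 1)).image v = (Finset.Icc 1 d1).image v)
    (hUt : e t ∩ (Finset.Icc 1 (t - 1)).image v = (Finset.Icc (t - d2) (t - 1)).image v) :
    Multiset.card (edgeNbhd E ((e 1 ∪ e t) \ {v d1, v (t - d2)})) ≤ m + 1 ∨
    ∃ S : Finset (Fin n), 2 * r - 1 ≤ S.card ∧
      edgeNbhd E S ≤
        (↑((List.range t).map fun i => e (i + 1)) : Multiset (Finset (Fin n))) := by
  have htr : t < r := (lt_of_not_ge fun hkt => hf (ht.mono hkt)).trans_le hrk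
  have hP : IsPathSkeleton E t e v := ⟨he, hvinj, hv1, hvt, hvmid⟩
  have hB1 := isInitialBlock_of_inter_image_eq hvinj hd1 hd1t he1 hU1
  have hBt := isInitialBlock_reverse_of_inter_image_eq hvinj hd2 (by omega) het hUt
  have hdd : d1 ≤ t - d2 := by
    by_contra! h
    exact hne1 (by rw [het _ (by omega) (by omega), ← het d1 (by omega) (by omega),
      he1 d1 hd1 le_rfl])
  have hle : ∀ {S}, (∀ w ∈ S, IsPathStart (pathEdges t e) t w) → edgeNbhd E S ≤ pathEdges t e :=
    edgeNbhd_le_of_isPathStart hu htr (by omega) hmax hcyc hP.edges_le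
  set W := (e 1 ∪ e t) \ {v d1, v (t - d2)}
  have hW : ∀ w ∈ W, IsPathStart (pathEdges t e) t w := fun w hw =>
    isPathStart_of_mem_sdiff hu htr hP hB1 hBt hw
  refine or_iff_not_imp_left.2 fun hcard => ?_
  obtain ⟨i, hi1, hi2, hiW⟩ : ∃ i, d1 + 1 ≤ i ∧ i ≤ t - d2 ∧ (e i ∩ W).Nonempty := by
    by_contra! hmid
    exact hcard ((Multiset.card_le_card (edgeNbhd_le_edgeNbhd_of_le (hle hW))).trans
      ((card_edgeNbhd_pathEdges_le hmid).trans hd12))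
  obtain ⟨y, hyW, hy⟩ := exists_isPathStart_notMem_sdiff hu htr hP hB1 hBt hi1 hi2 hiW
  refine ⟨insert y W, ?_, hle (Finset.forall_mem_insert _ _ _ |>.2 ⟨hy, hW⟩)⟩
  have := two_mul_sub_two_le_card_sdiff hu htr hcyc hP hB1 hBt hdd
  rw [Finset.card_insert_of_notMem hyW]
  omega

end BergeM
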